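/- arXiv:1403.3081 — 3 statements merged into one kernel-verified Lean document; each statement's English description precedes it below -/
import Mathlib

section
/- For all i ≥ 3, R_i ≡ 3 (mod 4), where R_i is the odd integer defined by 5^(2^(i-2)) = 1 + R_i·2^i. -/
/-- `R i` is the odd integer with `5 ^ (2 ^ (i - 2)) = 1 + R i * 2 ^ i`. -/
noncomputable def R (i : ℕ) : ℤ := ((5 : ℤ) ^ (2 ^ (i - 2)) - 1) / 2 ^ i

/-! Squaring `1 + r 2^(n+1)` gives `1 + r' 2^(n+2)` with `r' = r (1 + r 2^n)`, and `r' ≡ r (mod 4)`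
as soon as `n ≥ 2`. Starting from `5^2 = 1 + 3 · 2^3`, the odd parts of `5^(2^k) - 1` therefore
stay `≡ 3 (mod 4)`. -/

lemma one_add_mul_two_pow_sq (r : ℤ) (n : ℕ) :
    (1 + r * 2 ^ (n + 1)) ^ 2 = 1 + r * (1 + r * 2 ^ n) * 2 ^ (n + 2) := by
  ring

lemma mul_one_add_mul_two_pow_modEq (r : ℤ) (n : ℕ) :
    r * (1 + r * 2 ^ (n + 2)) ≡ r [ZMOD 4] := by
  have h : r * (1 + r * 2 ^ (n + 2)) = r + 4 * (r ^ 2 * 2 ^ n) := by ring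
  rw [Int.ModEq, h, Int.add_mul_emod_self_left]

lemma exists_five_pow_two_pow_eq (k : ℕ) :
    ∃ r : ℤ, (5 : ℤ) ^ 2 ^ (k + 1) = 1 + r * 2 ^ (k + 3) ∧ r ≡ 3 [ZMOD 4] := by
  induction k with
  | zero => exact ⟨3, by norm_num, rfl⟩
  | succ k ih =>
    obtain ⟨r, hpow, hr⟩ := ih
    refine ⟨r * (1 + r * 2 ^ (k + 2)), ?_, (mul_one_add_mul_two_pow_modEq r k).trans hr⟩
    rw [pow_succ 2 (k + 1), pow_mul, hpow, one_add_mul_two_pow_sq]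

lemma R_eq_of_five_pow_eq {i : ℕ} {r : ℤ} (h : (5 : ℤ) ^ 2 ^ (i - 2) = 1 + r * 2 ^ i) :
    R i = r := by
  simp [R, h]

theorem stmt_3 (i : ℕ) (hi : 3 ≤ i) : R i ≡ 3 [ZMOD 4] := by
  obtain ⟨k, rfl⟩ := Nat.exists_eq_add_of_le' hi
  obtain ⟨r, hpow, hr⟩ := exists_five_pow_two_pow_eq k
  rwa [R_eq_of_five_pow_eq hpow]
end

section
/- Let m ≥ 3, n > 0 with t + 2 ≤ m − n, A = 2^n·A₁ (A₁ odd), B odd, k = 2^t·k₁ (k₁ odd), and suppose n + 2(t+2) ≥ m. Then for every integer γ, A·5^(γk) + B ≡ (A + B)·5^(γ·A·k·(A+B)^{-1}·R_{t+2}·R_{t+n+2}^{-1}) (mod 2^m), where R_i is defined by 5^(2^(i-2)) = 1 + R_i·2^i and inverses are taken mod 2^m. -/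
lemma five_pow_two_pow (j : ℕ) : (5 : ℤ) ^ 2 ^ j = 1 + R (j + 2) * 2 ^ (j + 2) := by
  obtain ⟨r, hr⟩ : ∃ r : ℤ, (5 : ℤ) ^ 2 ^ j = 1 + r * 2 ^ (j + 2) := by
    induction j with
    | zero => exact ⟨1, by norm_num⟩
    | succ j ih =>
      obtain ⟨r, hr⟩ := ih
      exact ⟨r + r ^ 2 * 2 ^ (j + 1), by rw [pow_succ, pow_mul, hr]; ring⟩
  have hR : R (j + 2) = r := by
    rw [R, Nat.add_sub_cancel, hr, add_sub_cancel_left, Int.mul_ediv_cancel r (by positivity)]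
  rw [hR, hr]

lemma mul_one_add_pow_modEq (M x : ℤ) (c : ℕ) :
    M * (1 + x) ^ c ≡ M + c * M * x [ZMOD M * x ^ 2] := by
  have h := sq_dvd_add_pow_sub_sub x 1 c
  rw [one_pow, one_pow] at h
  exact (Int.modEq_iff_dvd.mpr ((mul_dvd_mul_left M h).trans (dvd_of_eq (by ring)))).symm

lemma mul_five_pow_two_pow_mul_modEq (M : ℤ) (j c : ℕ) :
    M * 5 ^ (2 ^ j * c) ≡ M + 2 ^ (j + 2) * (c * (M * R (j + 2)))
      [ZMOD M * 2 ^ (2 * (j + 2))] := by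
  have h := (mul_one_add_pow_modEq M (R (j + 2) * 2 ^ (j + 2)) c).of_dvd
    (m := M * 2 ^ (2 * (j + 2))) ⟨R (j + 2) ^ 2, by ring⟩
  rwa [← five_pow_two_pow, ← pow_mul, show (c : ℤ) * M * (R (j + 2) * 2 ^ (j + 2)) =
    2 ^ (j + 2) * (c * (M * R (j + 2))) by ring] at h

lemma two_pow_mul_mul_five_pow_modEq {m n t : ℕ} (h : m ≤ n + 2 * (t + 2)) (A₁ : ℤ)
    (c : ℕ) :
    2 ^ n * A₁ * 5 ^ (2 ^ t * c) ≡ 2 ^ n * A₁ + 2 ^ (t + n + 2) * (c * (A₁ * R (t + 2)))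
      [ZMOD 2 ^ m] := by
  have h' := (mul_five_pow_two_pow_mul_modEq (2 ^ n * A₁) t c).of_dvd (m := 2 ^ m)
    ((pow_dvd_pow 2 h).trans ⟨A₁, by ring⟩)
  rwa [show (2 : ℤ) ^ (t + 2) * (c * (2 ^ n * A₁ * R (t + 2))) =
    2 ^ (t + n + 2) * (c * (A₁ * R (t + 2))) by ring] at h'

lemma exists_eq_mul_of_natCast_modEq_mul {e d : ℕ} {x N : ℤ} (hd : d ≠ 0)
    (h : (e : ℤ) ≡ d * x [ZMOD d * N]) :
    ∃ c : ℕ, e = d * c ∧ (c : ℤ) ≡ x [ZMOD N] := by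
  have hde : (d : ℤ) ∣ e := (h.of_mul_right N).dvd_iff.mpr (dvd_mul_right _ _)
  obtain ⟨c, rfl⟩ := Int.natCast_dvd_natCast.mp hde
  push_cast at h
  exact ⟨c, rfl, h.mul_left_cancel' (by exact_mod_cast hd)⟩

theorem stmt_11_general (m n t : ℕ)
    (A A₁ B : ℤ) (k k₁ : ℕ)
    (hA : A = 2 ^ n * A₁)
    (hk : k = 2 ^ t * k₁)
    (hrange₁ : t + 2 ≤ m - n) (hrange₂ : m ≤ n + 2 * (t + 2)) :
    ∀ γ : ℕ, ∀ u v : ℤ,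
      u * (A + B) ≡ 1 [ZMOD 2 ^ m] →
      v * R (t + n + 2) ≡ 1 [ZMOD 2 ^ m] →
      ∀ e : ℕ, (e : ℤ) ≡ (γ : ℤ) * A * k * u * R (t + 2) * v [ZMOD 2 ^ (m - 2)] →
      A * 5 ^ (γ * k) + B ≡ (A + B) * 5 ^ e [ZMOD 2 ^ m] := by
  intro γ u v hu hv e he
  obtain ⟨s, hs⟩ : ∃ s, m = t + n + 2 + s := ⟨m - (t + n + 2), by omega⟩
  have hmod : (2 : ℤ) ^ m = 2 ^ (t + n + 2) * 2 ^ s := by rw [hs, pow_add]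
  obtain ⟨c, rfl, hc⟩ : ∃ c : ℕ, e = 2 ^ (t + n) * c ∧
      (c : ℤ) ≡ γ * k₁ * (A₁ * R (t + 2)) * (u * v) [ZMOD 2 ^ s] := by
    refine exists_eq_mul_of_natCast_modEq_mul (by positivity) ?_
    rw [show m - 2 = t + n + s by omega, pow_add, hA, hk] at he
    push_cast at he ⊢
    convert he using 1
    ring
  have hkey : c * ((A + B) * R (t + n + 2)) ≡ γ * k₁ * (A₁ * R (t + 2)) [ZMOD 2 ^ s] :=
    calc (c : ℤ) * ((A + B) * R (t + n + 2))
        ≡ γ * k₁ * (A₁ * R (t + 2)) * (u * (A + B) * (v * R (t + n + 2))) [ZMOD 2 ^ s] := by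
          convert hc.mul_right ((A + B) * R (t + n + 2)) using 1
          ring
      _ ≡ γ * k₁ * (A₁ * R (t + 2)) * 1 [ZMOD 2 ^ s] :=
          ((hu.mul hv).of_dvd (hmod ▸ dvd_mul_left _ _)).mul_left _
      _ = γ * k₁ * (A₁ * R (t + 2)) := mul_one _
  have hL := two_pow_mul_mul_five_pow_modEq hrange₂ A₁ (γ * k₁)
  rw [← hA, show 2 ^ t * (γ * k₁) = γ * k by rw [hk]; ring] at hL
  push_cast at hL
  have hR := (mul_five_pow_two_pow_mul_modEq (A + B) (t + n) c).of_dvd (m := 2 ^ m)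
    ((pow_dvd_pow 2 (by omega)).trans (dvd_mul_left _ _))
  calc A * 5 ^ (γ * k) + B
      ≡ A + B + 2 ^ (t + n + 2) * (γ * k₁ * (A₁ * R (t + 2))) [ZMOD 2 ^ m] := by
        convert hL.add_right B using 1
        ring
    _ ≡ A + B + 2 ^ (t + n + 2) * (c * ((A + B) * R (t + n + 2))) [ZMOD 2 ^ m] :=
        hmod ▸ (hkey.symm.mul_left' (c := 2 ^ (t + n + 2))).add_left _
    _ ≡ (A + B) * 5 ^ (2 ^ (t + n) * c) [ZMOD 2 ^ m] := hR.symm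

theorem stmt_11 (m n t : ℕ) (hm : 3 ≤ m) (hn : 0 < n)
    (A A₁ B : ℤ) (k k₁ : ℕ)
    (hA : A = 2 ^ n * A₁) (hA₁ : Odd A₁) (hB : Odd B)
    (hk : k = 2 ^ t * k₁) (hk₁ : Odd k₁)
    (hrange₁ : t + 2 ≤ m - n) (hrange₂ : m ≤ n + 2 * (t + 2)) :
    ∀ γ : ℕ, ∀ u v : ℤ,
      u * (A + B) ≡ 1 [ZMOD 2 ^ m] →
      v * R (t + n + 2) ≡ 1 [ZMOD 2 ^ m] →
      ∀ e : ℕ, (e : ℤ) ≡ (γ : ℤ) * A * k * u * R (t + 2) * v [ZMOD 2 ^ (m - 2)] →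
      A * 5 ^ (γ * k) + B ≡ (A + B) * 5 ^ e [ZMOD 2 ^ m] :=
  stmt_11_general m n t A A₁ B k k₁ hA hk hrange₁ hrange₂
end

section
/- Let m ≥ 3, χ₁, χ₂ multiplicative characters mod 2^m with χ₂ primitive, A = 2^n·A₁ (A₁ odd, n > 0), B odd, k = 2^t·k₁ (k₁ odd), and m − n = t + 2. Then Σ_{x=1}^{2^m} χ₁(x)·χ₂(A·x^k + B) equals 2^(m-1)·χ₂(A + B) if either (k is even and χ₁ is the principal character) or (k is odd and χ₁ = χ₄), and equals 0 otherwise. Here χ₄ is the mod 2^m character induced by the nontrivial character mod 4, i.e., χ₄(x) = ±1 according as x ≡ ±1 (mod 4). -/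
/-!
For a unit `x`, write `ε = χ₄(x) = ±1`. Odd `x` satisfies `x ≡ ε (mod 4)`, hence
`x ^ (2 ^ t) ≡ ε ^ (2 ^ t) (mod 2 ^ (t + 2))`; since `m = n + t + 2`, this gives
`A x ^ k = A ε ^ k` modulo `2 ^ m`. The sign `ε ^ k = -1` can only occur for odd `k`,
i.e. `t = 0`, and then `-A + B = (A + B)(1 + 2 ^ (m - 1))`, while `χ₂ (1 + 2 ^ (m - 1)) = -1`
because `χ₂` does not factor through `2 ^ (m - 1)`. So the summand equals
`(χ₁ χ₄ ^ k)(x) χ₂(A + B)` and the orthogonality of characters evaluates the sum.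
-/

/-- The mod `2^m` character induced by the nontrivial character mod 4:
`χ₄ x = 1` if `x ≡ 1 (mod 4)`, `-1` if `x ≡ 3 (mod 4)`, and `0` on even residues. -/
noncomputable def chi4 (m : ℕ) (x : ZMod (2 ^ m)) : ℂ :=
  if x.val % 4 = 1 then 1 else if x.val % 4 = 3 then -1 else 0

theorem mul_pow_eq_one_iff_of_sq_eq_one {G : Type*} [Group G] {g : G} (hg : g ^ 2 = 1) (a : G)
    (k : ℕ) : a * g ^ k = 1 ↔ (Even k ∧ a = 1) ∨ (Odd k ∧ a = g) := by
  rcases Nat.even_or_odd k with hk | hk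
  · have : g ^ k = 1 := by obtain ⟨j, rfl⟩ := even_iff_two_dvd.1 hk; rw [pow_mul, hg, one_pow]
    simp [this, hk, Nat.not_odd_iff_even.2 hk]
  · have : g ^ k = g := by obtain ⟨j, rfl⟩ := hk; rw [pow_succ, pow_mul, hg, one_pow, one_mul]
    have hinv : g⁻¹ = g := inv_eq_of_mul_eq_one_right (by rw [← sq, hg])
    simp [this, hk, Nat.not_even_iff_odd.2 hk, mul_eq_one_iff_eq_inv, hinv]

open Classical in
theorem MulChar.sum_eq_ite {R R' : Type*} [CommMonoid R] [Fintype R] [CommRing R'] [IsDomain R']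
    (χ : MulChar R R') : ∑ a, χ a = if χ = 1 then (Nat.card Rˣ : R') else 0 := by
  split_ifs with h
  · rw [h, sum_one_eq_card_units, Nat.card_eq_fintype_card]
  · exact sum_eq_zero_of_ne_one h

theorem Int.two_pow_add_two_dvd_pow_two_pow_sub_pow {y s : ℤ} (hy : Odd y) (h : 4 ∣ y - s)
    (t : ℕ) : 2 ^ (t + 2) ∣ y ^ 2 ^ t - s ^ 2 ^ t := by
  have hs : Odd s := by
    rw [Int.odd_iff] at hy ⊢
    omega
  induction t with
  | zero => simpa using h
  | succ t ih =>
    have hsum : 2 ∣ y ^ 2 ^ t + s ^ 2 ^ t := even_iff_two_dvd.1 (hy.pow.add_odd hs.pow)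
    have hfac : y ^ 2 ^ (t + 1) - s ^ 2 ^ (t + 1) =
        (y ^ 2 ^ t - s ^ 2 ^ t) * (y ^ 2 ^ t + s ^ 2 ^ t) := by
      rw [pow_succ, pow_mul, pow_mul]
      ring
    rw [hfac, pow_succ]
    exact mul_dvd_mul ih hsum

namespace ZMod

variable {m : ℕ}

lemma card_units_two_pow (hm : m ≠ 0) : Nat.card (ZMod (2 ^ m))ˣ = 2 ^ (m - 1) := by
  rw [Nat.card_eq_fintype_card, card_units_eq_totient,
    Nat.totient_prime_pow Nat.prime_two (Nat.pos_of_ne_zero hm), Nat.add_one_sub_one, mul_one]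

lemma isUnit_iff_odd_val (hm : m ≠ 0) (x : ZMod (2 ^ m)) : IsUnit x ↔ Odd x.val := by
  conv_lhs => rw [← natCast_zmod_val x]
  rw [isUnit_iff_coprime, Nat.coprime_pow_right_iff (Nat.pos_of_ne_zero hm), Nat.coprime_two_right]

lemma two_mul_two_pow_pred (hm : m ≠ 0) : (2 : ZMod (2 ^ m)) * 2 ^ (m - 1) = 0 := by
  rw [← pow_succ', Nat.sub_add_cancel (Nat.one_le_iff_ne_zero.2 hm)]
  exact_mod_cast natCast_self (2 ^ m)

lemma two_pow_pred_mul_intCast_of_odd (hm : m ≠ 0) {y : ℤ} (hy : Odd y) :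
    (2 : ZMod (2 ^ m)) ^ (m - 1) * y = 2 ^ (m - 1) := by
  obtain ⟨c, rfl⟩ := hy
  push_cast
  linear_combination c * two_mul_two_pow_pred hm

lemma eq_one_or_eq_one_add_two_pow_pred_of_castHom_eq_one (hm : m ≠ 0) {w : ZMod (2 ^ m)}
    (hw : castHom (pow_dvd_pow 2 (m.sub_le 1)) (ZMod (2 ^ (m - 1))) w = 1) :
    w = 1 ∨ w = 1 + 2 ^ (m - 1) := by
  obtain ⟨y, rfl⟩ := intCast_surjective w
  rw [map_intCast, ← Int.cast_one, intCast_eq_intCast_iff_dvd_sub] at hw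
  obtain ⟨j, hj⟩ := hw
  have hy : (y : ZMod (2 ^ m)) = 1 - 2 ^ (m - 1) * j := by
    have := congrArg (Int.cast : ℤ → ZMod (2 ^ m)) hj
    push_cast at this
    linear_combination -this
  rcases Int.even_or_odd' j with ⟨i, rfl | rfl⟩
  · left
    push_cast at hy
    linear_combination hy - i * two_mul_two_pow_pred hm
  · right
    push_cast at hy
    linear_combination hy - (i + 1) * two_mul_two_pow_pred hm

lemma intCast_two_pow_mul_mul_pow_eq {n t k₁ : ℕ} (hm : m ≤ n + t + 2) (a : ℤ)
    {x : ZMod (2 ^ m)} (hx : Odd x.val) {s : ℤ} (hs : 4 ∣ (x.val : ℤ) - s) :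
    ((2 ^ n * a : ℤ) : ZMod (2 ^ m)) * x ^ (2 ^ t * k₁) =
      (2 ^ n * a : ℤ) * (s : ZMod (2 ^ m)) ^ (2 ^ t * k₁) := by
  have hdvd :
      ((2 ^ m : ℕ) : ℤ) ∣ 2 ^ n * a * ((x.val : ℤ) ^ (2 ^ t * k₁) - s ^ (2 ^ t * k₁)) := by
    have h := (Int.two_pow_add_two_dvd_pow_two_pow_sub_pow ((Int.odd_coe_nat _).2 hx) hs t).trans
      (sub_dvd_pow_sub_pow _ _ k₁)
    rw [← pow_mul, ← pow_mul] at h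
    push_cast
    calc (2 : ℤ) ^ m ∣ 2 ^ (n + t + 2) := pow_dvd_pow 2 hm
      _ = 2 ^ n * 2 ^ (t + 2) := by ring
      _ ∣ _ := by rw [mul_assoc]; exact mul_dvd_mul_left _ (h.mul_left a)
  have := (intCast_zmod_eq_zero_iff_dvd _ _).2 hdvd
  push_cast at this
  rw [← natCast_zmod_val x]
  push_cast
  linear_combination this

end ZMod

noncomputable def chi4Char {N : ℕ} (h : 4 ∣ N) : DirichletCharacter ℂ N :=
  DirichletCharacter.changeLevel h (ZMod.χ₄.ringHomComp (Int.castRingHom ℂ))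

lemma chi4Char_sq {N : ℕ} (h : 4 ∣ N) : chi4Char h ^ 2 = 1 := by
  rw [chi4Char, ← map_pow, (ZMod.isQuadratic_χ₄.comp _).sq_eq_one, map_one]

lemma chi4Char_apply {m : ℕ} (h : 4 ∣ 2 ^ m) (x : ZMod (2 ^ m)) : chi4Char h x = chi4 m x := by
  have hm : m ≠ 0 := by rintro rfl; norm_num at h
  by_cases hx : IsUnit x
  · have hodd := Nat.odd_iff.1 ((ZMod.isUnit_iff_odd_val hm x).1 hx)
    lift x to (ZMod (2 ^ m))ˣ using hx
    rw [chi4Char, DirichletCharacter.changeLevel_eq_cast_of_dvd, ZMod.cast_eq_val,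
      MulChar.ringHomComp_apply, ZMod.χ₄_nat_eq_if_mod_four, chi4]
    rcases Nat.odd_mod_four_iff.1 hodd with h1 | h3 <;> simp [*]
  · have heven := Nat.even_iff.1 (Nat.not_odd_iff_even.1 (mt (ZMod.isUnit_iff_odd_val hm x).2 hx))
    rw [MulChar.map_nonunit _ hx, chi4, if_neg (by omega), if_neg (by omega)]

namespace DirichletCharacter.IsPrimitive

open ZMod

variable {m : ℕ} {χ : DirichletCharacter ℂ (2 ^ m)}

theorem apply_one_add_two_pow_pred (hm : 2 ≤ m) (hχ : χ.IsPrimitive) :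
    χ (1 + 2 ^ (m - 1)) = -1 := by
  have hm0 : m ≠ 0 := by omega
  have hsq : (1 + 2 ^ (m - 1) : ZMod (2 ^ m)) ^ 2 = 1 := by
    have h : (2 : ZMod (2 ^ m)) ^ (m - 1) = 2 * 2 ^ (m - 2) := by
      rw [← pow_succ']; congr 1; omega
    linear_combination (1 + 2 ^ (m - 2)) * two_mul_two_pow_pred hm0 + 2 ^ (m - 1) * h
  have hχsq : χ (1 + 2 ^ (m - 1)) ^ 2 = 1 := by rw [← map_pow, hsq, map_one]
  refine (sq_eq_one_iff.1 hχsq).resolve_left fun h1 => ?_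
  have hd : 2 ^ (m - 1) ∣ 2 ^ m := pow_dvd_pow 2 (m.sub_le 1)
  -- the kernel of `(ZMod (2 ^ m))ˣ → (ZMod (2 ^ (m - 1)))ˣ` is `{1, 1 + 2 ^ (m - 1)}`
  have hfac : χ.FactorsThrough (2 ^ (m - 1)) := by
    refine (factorsThrough_iff_ker_unitsMap hd).2 fun w hw => ?_
    rw [MonoidHom.mem_ker, Units.ext_iff, MulChar.coe_toUnitHom, Units.val_one]
    rcases eq_one_or_eq_one_add_two_pow_pred_of_castHom_eq_one hm0 (congrArg Units.val hw) with
      h | h <;> rw [h]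
    · exact map_one χ
    · exact h1
  have hle : 2 ^ m ≤ 2 ^ (m - 1) := hχ ▸ Nat.sInf_le hfac
  have hlt : 2 ^ (m - 1) < 2 ^ m := Nat.pow_lt_pow_right (by norm_num) (by omega)
  omega

theorem apply_neg_two_pow_mul_add {n : ℕ} (hn : n ≠ 0) (hmn : m = n + 2) (hχ : χ.IsPrimitive)
    {a b : ℤ} (ha : _root_.Odd a) (hb : _root_.Odd b) :
    χ (-((2 ^ n * a : ℤ) : ZMod (2 ^ m)) + b) = -χ ((2 ^ n * a : ℤ) + b) := by
  subst hmn
  have hab : _root_.Odd (2 ^ n * a + b) := ((Int.even_pow' hn).2 even_two).mul_right a |>.add_odd hb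
  have h1 : (2 : ZMod (2 ^ (n + 2))) ^ (n + 1) * a = 2 ^ (n + 1) :=
    two_pow_pred_mul_intCast_of_odd (by omega) ha
  have h2 : (2 : ZMod (2 ^ (n + 2))) ^ (n + 1) * ((2 ^ n * a + b : ℤ) : ZMod (2 ^ (n + 2))) =
      2 ^ (n + 1) :=
    two_pow_pred_mul_intCast_of_odd (by omega) hab
  have h3 : (2 : ZMod (2 ^ (n + 2))) * 2 ^ (n + 1) = 0 := two_mul_two_pow_pred (by omega)
  have hχ' : χ (1 + 2 ^ (n + 1)) = -1 := hχ.apply_one_add_two_pow_pred (by omega)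
  push_cast at h2 ⊢
  have hshift : -(2 ^ n * a : ZMod (2 ^ (n + 2))) + b = (2 ^ n * a + b) * (1 + 2 ^ (n + 1)) := by
    linear_combination -h1 - h2 - h3
  rw [hshift, map_mul, hχ', mul_neg_one]

theorem apply_two_pow_mul_mul_pow_add {n t k₁ : ℕ} (hn : n ≠ 0) (hmn : m = n + t + 2)
    (hχ : χ.IsPrimitive) {a b : ℤ} (ha : _root_.Odd a) (hb : _root_.Odd b) {x : ZMod (2 ^ m)}
    (hx : IsUnit x) :
    χ (((2 ^ n * a : ℤ) : ZMod (2 ^ m)) * x ^ (2 ^ t * k₁) + b) =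
      chi4 m x ^ (2 ^ t * k₁) * χ ((2 ^ n * a : ℤ) + b) := by
  have hodd : _root_.Odd x.val := (isUnit_iff_odd_val (by omega) x).1 hx
  rcases Nat.odd_mod_four_iff.1 (Nat.odd_iff.1 hodd) with h1 | h3
  · rw [intCast_two_pow_mul_mul_pow_eq hmn.le a hodd (s := 1) (by omega), chi4, if_pos h1]
    simp
  · rw [intCast_two_pow_mul_mul_pow_eq hmn.le a hodd (s := -1) (by omega), chi4,
      if_neg (by omega), if_pos h3]
    rcases Nat.even_or_odd (2 ^ t * k₁) with hk | hk
    · simp [hk.neg_one_pow]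
    · obtain rfl : t = 0 := by
        by_contra ht
        exact Nat.not_even_iff_odd.2 hk ((Nat.even_pow' ht).2 even_two |>.mul_right k₁)
      simp only [hk.neg_one_pow, Int.cast_neg, Int.cast_one, mul_neg_one, neg_one_mul]
      exact hχ.apply_neg_two_pow_mul_add hn hmn ha hb

end DirichletCharacter.IsPrimitive

theorem stmt_12_general (m n t : ℕ) (hn : 0 < n)
    (χ₁ χ₂ : DirichletCharacter ℂ (2 ^ m)) (h₂ : χ₂.IsPrimitive)
    (A A₁ B : ℤ) (k k₁ : ℕ)
    (hA : A = 2 ^ n * A₁) (hA₁ : Odd A₁) (hB : Odd B)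
    (hk : k = 2 ^ t * k₁)
    (hmn : m - n = t + 2) :
    ∑ x : ZMod (2 ^ m), χ₁ x * χ₂ ((A : ZMod (2 ^ m)) * x ^ k + B) =
      if (Even k ∧ χ₁ = 1) ∨ (Odd k ∧ ∀ x, χ₁ x = chi4 m x) then
        2 ^ (m - 1) * χ₂ ((A : ZMod (2 ^ m)) + B)
      else 0 := by
  have hm : m = n + t + 2 := by omega
  have h4 : 4 ∣ 2 ^ m := pow_dvd_pow 2 (by omega : 2 ≤ m)
  have hterm : ∀ x, χ₁ x * χ₂ ((A : ZMod (2 ^ m)) * x ^ k + B) =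
      (χ₁ * chi4Char h4 ^ k) x * χ₂ ((A : ZMod (2 ^ m)) + B) := by
    intro x
    by_cases hx : IsUnit x
    · subst hA hk
      rw [h₂.apply_two_pow_mul_mul_pow_add hn.ne' hm hA₁ hB hx, MulChar.mul_apply,
        ← hx.unit_spec, MulChar.pow_apply_coe, chi4Char_apply, mul_assoc]
    · rw [MulChar.map_nonunit _ hx, MulChar.map_nonunit _ hx, zero_mul, zero_mul]
  have hcond : χ₁ * chi4Char h4 ^ k = 1 ↔
      (Even k ∧ χ₁ = 1) ∨ (Odd k ∧ ∀ x, χ₁ x = chi4 m x) := by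
    simp only [mul_pow_eq_one_iff_of_sq_eq_one (chi4Char_sq h4), DFunLike.ext_iff, chi4Char_apply]
  rw [Finset.sum_congr rfl fun x _ => hterm x, ← Finset.sum_mul, MulChar.sum_eq_ite,
    ZMod.card_units_two_pow (by omega)]
  simp only [hcond]
  split_ifs <;> simp

theorem stmt_12 (m n t : ℕ) (hm : 3 ≤ m) (hn : 0 < n)
    (χ₁ χ₂ : DirichletCharacter ℂ (2 ^ m)) (h₂ : χ₂.IsPrimitive)
    (A A₁ B : ℤ) (k k₁ : ℕ)
    (hA : A = 2 ^ n * A₁) (hA₁ : Odd A₁) (hB : Odd B)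
    (hk : k = 2 ^ t * k₁) (hk₁ : Odd k₁)
    (hmn : m - n = t + 2) (hnm : n < m) :
    ∑ x : ZMod (2 ^ m), χ₁ x * χ₂ ((A : ZMod (2 ^ m)) * x ^ k + B) =
      if (Even k ∧ χ₁ = 1) ∨ (Odd k ∧ ∀ x, χ₁ x = chi4 m x) then
        2 ^ (m - 1) * χ₂ ((A : ZMod (2 ^ m)) + B)
      else 0 :=
  stmt_12_general m n t hn χ₁ χ₂ h₂ A A₁ B k k₁ hA hA₁ hB hk hmn
end
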